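/- Suppose there exists a state s† such that every action taken at s† leads to a reset state, and the reset mechanism returns the agent to s†. Then for any learning algorithm that at the initial state takes some action in a fixed nonempty subset à ⊆ A with probability at least a constant p > 0 per episode, there exists an MDP (consistent with the first initial state admitting a reset-free policy) on which the expected number of resets over K episodes is at least p·K, i.e., linear in K. -/

import Mathlib

open Finset

/-- `P` is a stochastic transition kernel. -/
def StochMat {S A : Type*} [Fintype S] (P : S → A → S → ℝ) : Prop :=
  ∀ s a, (∀ s', 0 ≤ P s a s') ∧ ∑ s', P s a s' = 1

/-- `π` is a stationary stochastic policy. -/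
def StochPol {S A : Type*} [Fintype A] (π : S → A → ℝ) : Prop :=
  ∀ s, (∀ a, 0 ≤ π s a) ∧ ∑ a, π s a = 1

/-- `survDist P π Sreset n s s'` : probability of being at `s'` after `n` steps of
`π` from `s` without having visited a reset state (including the current state). -/
noncomputable def survDist {S A : Type*} [Fintype S] [Fintype A] [DecidableEq S]
    (P : S → A → S → ℝ) (π : S → A → ℝ) (Sreset : Finset S) :
    ℕ → S → S → ℝ
  | 0, s, s' => if s ∈ Sreset then 0 else if s' = s then 1 else 0
  | n + 1, s, s' =>
      if s ∈ Sreset then 0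
      else ∑ a, π s a * ∑ t, P s a t * survDist P π Sreset n t s'

/-- Probability that an episode of horizon `H` run with `π` from `s` visits a
reset state. -/
noncomputable def resetProb {S A : Type*} [Fintype S] [Fintype A] [DecidableEq S]
    (P : S → A → S → ℝ) (π : S → A → ℝ) (Sreset : Finset S) (H : ℕ) (s : S) : ℝ :=
  1 - ∑ s', survDist P π Sreset H s s'

/-- Distribution of the initial state of episode `k`: episode `0` starts at `s11`;
if an episode resets, the next episode starts at `sdag`; otherwise it starts at the
final state of the previous episode. -/
noncomputable def startDist {S A : Type*} [Fintype S] [Fintype A] [DecidableEq S]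
    (P : S → A → S → ℝ) (Sreset : Finset S) (sdag : S)
    (πs : ℕ → S → A → ℝ) (H : ℕ) (s11 : S) : ℕ → S → ℝ
  | 0, s => if s = s11 then 1 else 0
  | k + 1, s =>
      (∑ t, startDist P Sreset sdag πs H s11 k t *
          resetProb P (πs k) Sreset H t) * (if s = sdag then 1 else 0) +
        ∑ t, startDist P Sreset sdag πs H s11 k t *
          survDist P (πs k) Sreset H t s

/-- Expected total number of resets over `K` episodes. -/
noncomputable def expectedResets {S A : Type*} [Fintype S] [Fintype A] [DecidableEq S]
    (P : S → A → S → ℝ) (Sreset : Finset S) (sdag : S)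
    (πs : ℕ → S → A → ℝ) (H : ℕ) (s11 : S) (K : ℕ) : ℝ :=
  ∑ k ∈ Finset.range K, ∑ t, startDist P Sreset sdag πs H s11 k t *
    resetProb P (πs k) Sreset H t

/-!
Let every action lead deterministically to a single reset state `s̄`, except the actions
outside `Ã` taken at `s₁¹`, which stay at `s₁¹`. A policy avoiding `Ã` then never resets
from `s₁¹`. On the other hand an episode that survives from `s₁¹` ends at `s₁¹`, so every
episode starts at `s₁¹` or at `s†`. From `s₁¹` it survives only while it keeps avoiding `Ã`,
so it resets with probability at least `π(Ã | s₁¹) ≥ p`; from `s†` it resets surely.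
Averaging over the start distribution gives at least `p` expected resets per episode.
-/

theorem StochPol.sum_le_one {S A : Type*} [Fintype A] {π : S → A → ℝ} (hπ : StochPol π)
    (s : S) (B : Finset A) : ∑ a ∈ B, π s a ≤ 1 :=
  (sum_le_univ_sum_of_nonneg (hπ s).1).trans (hπ s).2.le

theorem le_sum_mul_of_forall_ne_zero {ι : Type*} [Fintype ι] {w f : ι → ℝ} {p : ℝ}
    (hw : ∀ i, 0 ≤ w i) (hw1 : ∑ i, w i = 1) (hf : ∀ i, w i ≠ 0 → p ≤ f i) :
    p ≤ ∑ i, w i * f i :=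
  calc p = ∑ i, w i * p := by rw [← sum_mul, hw1, one_mul]
    _ ≤ ∑ i, w i * f i := sum_le_sum fun i _ => by
        rcases eq_or_ne (w i) 0 with h | h
        · simp [h]
        · exact mul_le_mul_of_nonneg_left (hf i h) (hw i)

section Survival

variable {S A : Type*} [Fintype S] [Fintype A] [DecidableEq S]
  {P : S → A → S → ℝ} {π : S → A → ℝ} {Sreset : Finset S}

theorem survDist_of_mem {s : S} (hs : s ∈ Sreset) (n : ℕ) (s' : S) :
    survDist P π Sreset n s s' = 0 := by
  cases n <;> simp [survDist, hs]

theorem survDist_nonneg (hP : StochMat P) (hπ : StochPol π) :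
    ∀ n s s', 0 ≤ survDist P π Sreset n s s'
  | 0, s, s' => by
    unfold survDist
    split_ifs <;> norm_num
  | n + 1, s, s' => by
    unfold survDist
    split_ifs
    · rfl
    · exact sum_nonneg fun a _ => mul_nonneg ((hπ s).1 a) <|
        sum_nonneg fun t _ => mul_nonneg ((hP s a).1 t) (survDist_nonneg hP hπ n t s')

theorem sum_survDist_le_one (hP : StochMat P) (hπ : StochPol π) :
    ∀ n s, ∑ s', survDist P π Sreset n s s' ≤ 1
  | 0, s => by by_cases hs : s ∈ Sreset <;> simp [survDist, hs]
  | n + 1, s => by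
    by_cases hs : s ∈ Sreset
    · simp [survDist, hs]
    simp only [survDist, if_neg hs]
    calc ∑ s', ∑ a, π s a * ∑ t, P s a t * survDist P π Sreset n t s'
        = ∑ a, π s a * ∑ t, P s a t * ∑ s', survDist P π Sreset n t s' := by
          simp only [mul_sum]
          rw [sum_comm]
          exact sum_congr rfl fun a _ => sum_comm
      _ ≤ ∑ a, π s a * ∑ t, P s a t * 1 := by
          gcongr with a _ t _
          · exact (hπ s).1 a
          · exact (hP s a).1 t
          · exact sum_survDist_le_one hP hπ n t
      _ = 1 := by simp [(hP _ _).2, (hπ s).2]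

theorem resetProb_nonneg (hP : StochMat P) (hπ : StochPol π) (H : ℕ) (s : S) :
    0 ≤ resetProb P π Sreset H s :=
  sub_nonneg.2 (sum_survDist_le_one hP hπ H s)

theorem survDist_succ_eq_zero_of_forall_reset {s : S}
    (hs : ∀ a t, P s a t ≠ 0 → t ∈ Sreset) (n : ℕ) (s' : S) :
    survDist P π Sreset (n + 1) s s' = 0 := by
  simp only [survDist]
  split_ifs
  · rfl
  refine sum_eq_zero fun a _ => mul_eq_zero_of_right _ (sum_eq_zero fun t _ => ?_)
  by_cases ht : P s a t = 0
  · rw [ht, zero_mul]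
  · rw [survDist_of_mem (hs a t ht), mul_zero]

theorem resetProb_eq_one_of_forall_reset {s : S}
    (hs : ∀ a t, P s a t ≠ 0 → t ∈ Sreset) (n : ℕ) :
    resetProb P π Sreset (n + 1) s = 1 := by
  simp [resetProb, survDist_succ_eq_zero_of_forall_reset hs]

end Survival

section Episodes

variable {S A : Type*} [Fintype S] [Fintype A] [DecidableEq S]
  {P : S → A → S → ℝ} {Sreset : Finset S} {sdag s11 : S} {πs : ℕ → S → A → ℝ} {H : ℕ}

theorem startDist_nonneg (hP : StochMat P) (hπs : ∀ k, StochPol (πs k)) :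
    ∀ k s, 0 ≤ startDist P Sreset sdag πs H s11 k s
  | 0, s => by
    unfold startDist
    split_ifs <;> norm_num
  | k + 1, s => by
    have hD := startDist_nonneg hP hπs k
    unfold startDist
    refine add_nonneg (mul_nonneg ?_ ?_) ?_
    · exact sum_nonneg fun t _ => mul_nonneg (hD t) (resetProb_nonneg hP (hπs k) H t)
    · split_ifs <;> norm_num
    · exact sum_nonneg fun t _ => mul_nonneg (hD t) (survDist_nonneg hP (hπs k) H t s)

theorem sum_startDist : ∀ k, ∑ s, startDist P Sreset sdag πs H s11 k s = 1
  | 0 => by simp [startDist]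
  | k + 1 => by
    calc ∑ s, startDist P Sreset sdag πs H s11 (k + 1) s
        = ∑ t, startDist P Sreset sdag πs H s11 k t * (resetProb P (πs k) Sreset H t
            + ∑ s, survDist P (πs k) Sreset H t s) := by
          simp only [startDist, sum_add_distrib, ← mul_sum, sum_ite_eq', mem_univ, if_true, mul_one,
            mul_add]
          rw [sum_comm]
          simp only [mul_sum]
      _ = 1 := by simp [resetProb, sum_startDist k]

theorem startDist_eq_zero_of_notMem {T : Set S} (h11 : s11 ∈ T) (hdag : sdag ∈ T)
    (hT : ∀ k, ∀ t ∈ T, ∀ s ∉ T, survDist P (πs k) Sreset H t s = 0) :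
    ∀ k, ∀ s ∉ T, startDist P Sreset sdag πs H s11 k s = 0
  | 0, s, hs => by simp [startDist, ne_of_mem_of_not_mem h11 hs |>.symm]
  | k + 1, s, hs => by
    simp only [startDist, if_neg (ne_of_mem_of_not_mem hdag hs).symm, mul_zero, zero_add]
    refine sum_eq_zero fun t _ => ?_
    by_cases ht : t ∈ T
    · rw [hT k t ht s hs, mul_zero]
    · rw [startDist_eq_zero_of_notMem h11 hdag hT k t ht, zero_mul]

theorem mul_le_expectedResets {T : Set S} {p : ℝ} (hP : StochMat P)
    (hπs : ∀ k, StochPol (πs k)) (h11 : s11 ∈ T) (hdag : sdag ∈ T)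
    (hT : ∀ k, ∀ t ∈ T, ∀ s ∉ T, survDist P (πs k) Sreset H t s = 0)
    (hreset : ∀ k, ∀ t ∈ T, p ≤ resetProb P (πs k) Sreset H t) (K : ℕ) :
    p * K ≤ expectedResets P Sreset sdag πs H s11 K := by
  have hepisode : ∀ k ∈ range K,
      p ≤ ∑ t, startDist P Sreset sdag πs H s11 k t * resetProb P (πs k) Sreset H t :=
    fun k _ => le_sum_mul_of_forall_ne_zero (startDist_nonneg hP hπs k) (sum_startDist k)
      fun t ht => hreset k t <|
        by_contra fun h => ht (startDist_eq_zero_of_notMem h11 hdag hT k t h)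
  have := card_nsmul_le_sum _ _ _ hepisode
  rwa [card_range, nsmul_eq_mul, mul_comm] at this

end Episodes

section Trap

variable {S A : Type*} [DecidableEq S] [DecidableEq A] {s11 sbar : S} {Atil : Finset A}

def trapKernel (s11 sbar : S) (Atil : Finset A) : S → A → S → ℝ := fun s a s' =>
  if s = s11 ∧ a ∉ Atil then (if s' = s11 then 1 else 0) else (if s' = sbar then 1 else 0)

theorem eq_of_trapKernel_ne_zero {s s' : S} {a : A} (h : ¬(s = s11 ∧ a ∉ Atil))
    (h' : trapKernel s11 sbar Atil s a s' ≠ 0) : s' = sbar := by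
  by_contra hs'
  simp [trapKernel, h, hs'] at h'

variable [Fintype S]

theorem trapKernel_stochMat : StochMat (trapKernel s11 sbar Atil) := fun s a => by
  unfold trapKernel
  exact ⟨fun s' => by split_ifs <;> norm_num, by split_ifs <;> simp⟩

variable [Fintype A] {π : S → A → ℝ}

theorem survDist_trapKernel_initial (hs : s11 ≠ sbar) (n : ℕ) (s' : S) :
    survDist (trapKernel s11 sbar Atil) π {sbar} n s11 s' =
      (∑ a ∈ Atilᶜ, π s11 a) ^ n * if s' = s11 then 1 else 0 := by
  induction n with
  | zero => simp [survDist, hs]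
  | succ n ih =>
    have hstep : ∀ a, ∑ t, trapKernel s11 sbar Atil s11 a t *
        survDist (trapKernel s11 sbar Atil) π {sbar} n t s' =
          if a ∈ Atilᶜ then survDist (trapKernel s11 sbar Atil) π {sbar} n s11 s' else 0 := by
      intro a
      by_cases ha : a ∈ Atil <;> simp [trapKernel, ha, survDist_of_mem]
    simp only [survDist, mem_singleton, if_neg hs, hstep, mul_ite, mul_zero, sum_ite_mem,
      univ_inter]
    rw [← sum_mul, ih]
    split_ifs <;> ring

theorem resetProb_trapKernel_initial (hs : s11 ≠ sbar) (n : ℕ) :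
    resetProb (trapKernel s11 sbar Atil) π {sbar} n s11 = 1 - (∑ a ∈ Atilᶜ, π s11 a) ^ n := by
  simp [resetProb, survDist_trapKernel_initial hs]

theorem sum_le_resetProb_trapKernel_initial (hs : s11 ≠ sbar) (hπ : StochPol π) (n : ℕ) :
    ∑ a ∈ Atil, π s11 a ≤ resetProb (trapKernel s11 sbar Atil) π {sbar} (n + 1) s11 := by
  have hsplit := sum_add_sum_compl Atil (π s11)
  have hAtil := sum_nonneg fun a (_ : a ∈ Atil) => (hπ s11).1 a
  have hcompl := sum_nonneg fun a (_ : a ∈ Atilᶜ) => (hπ s11).1 a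
  have hpow : (∑ a ∈ Atilᶜ, π s11 a) ^ (n + 1) ≤ ∑ a ∈ Atilᶜ, π s11 a :=
    pow_le_of_le_one hcompl (by linarith [(hπ s11).2]) n.succ_ne_zero
  rw [resetProb_trapKernel_initial hs]
  linarith [(hπ s11).2]

end Trap

theorem exists_mdp_with_linear_resets_general
    {S A : Type*} [Fintype S] [Fintype A] [DecidableEq S] [DecidableEq A]
    (s11 sdag sbar : S)
    (hne₁ : s11 ≠ sdag) (hne₂ : s11 ≠ sbar) (hne₃ : sdag ≠ sbar)
    (Atil : Finset A) (hAtil' : Atilᶜ.Nonempty)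
    (p : ℝ)
    (H K : ℕ) (hH : 1 ≤ H) :
    ∃ (Sreset : Finset S) (P : S → A → S → ℝ),
      StochMat P ∧ s11 ∉ Sreset ∧ sdag ∉ Sreset ∧
      -- actions in Ã from the first initial state lead to reset states
      (∀ a ∈ Atil, ∀ s', P s11 a s' ≠ 0 → s' ∈ Sreset) ∧
      -- every action from s† leads to a reset state
      (∀ (a : A) (s' : S), P sdag a s' ≠ 0 → s' ∈ Sreset) ∧
      -- the first initial state admits a reset-free policy
      (∃ πfree : S → A → ℝ, StochPol πfree ∧
        resetProb P πfree Sreset H s11 = 0) ∧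
      -- any algorithm taking Ã at the initial state with probability ≥ p per
      -- episode incurs at least p·K expected resets
      (∀ πs : ℕ → S → A → ℝ, (∀ k, StochPol (πs k)) →
        (∀ k, p ≤ ∑ a ∈ Atil, πs k s11 a) →
        p * K ≤ expectedResets P Sreset sdag πs H s11 K) := by
  obtain ⟨a₀, ha₀⟩ := hAtil'
  obtain ⟨m, rfl⟩ := Nat.exists_eq_add_of_le' hH
  have hinitial :
      ∀ a ∈ Atil, ∀ s', trapKernel s11 sbar Atil s11 a s' ≠ 0 → s' ∈ ({sbar} : Finset S) :=
    fun a ha s' h => mem_singleton.2 (eq_of_trapKernel_ne_zero (fun h' => h'.2 ha) h)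
  have hsdag : ∀ a s', trapKernel s11 sbar Atil sdag a s' ≠ 0 → s' ∈ ({sbar} : Finset S) :=
    fun a s' h => mem_singleton.2 (eq_of_trapKernel_ne_zero (fun h' => hne₁ h'.1.symm) h)
  have hfree : StochPol fun (_ : S) a => if a = a₀ then (1 : ℝ) else 0 :=
    fun _ => ⟨fun _ => ite_nonneg zero_le_one le_rfl, by simp⟩
  refine ⟨{sbar}, trapKernel s11 sbar Atil, trapKernel_stochMat, by simpa using hne₂,
    by simpa using hne₃, hinitial, hsdag,
    ⟨_, hfree, by simp [resetProb_trapKernel_initial hne₂, ha₀]⟩, fun πs hπs hp => ?_⟩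
  refine mul_le_expectedResets (T := {s11, sdag}) trapKernel_stochMat hπs (by simp) (by simp)
    ?_ ?_ K
  · rintro k t (rfl | rfl) s hs
    · simp [survDist_trapKernel_initial hne₂, show s ≠ t from fun h => hs (Or.inl h)]
    · exact survDist_succ_eq_zero_of_forall_reset hsdag m s
  · rintro k t (rfl | rfl)
    · exact (hp k).trans (sum_le_resetProb_trapKernel_initial hne₂ (hπs k) m)
    · rw [resetProb_eq_one_of_forall_reset hsdag]
      exact (hp k).trans ((hπs k).sum_le_one _ _)

/-- Suppose every action taken at `s†` leads to a reset state and
the reset mechanism returns the agent to `s†`. Then for any learning algorithm that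
at the initial state takes some action in a fixed nonempty subset `Ã ⊆ A` with
probability at least `p > 0` per episode, there exists an MDP — consistent with the
first initial state `s₁¹` admitting a reset-free policy — on which the expected
number of resets over `K` episodes is at least `p·K`. -/
theorem exists_mdp_with_linear_resets
    {S A : Type*} [Fintype S] [Fintype A] [DecidableEq S] [DecidableEq A]
    (s11 sdag sbar : S)
    (hne₁ : s11 ≠ sdag) (hne₂ : s11 ≠ sbar) (hne₃ : sdag ≠ sbar)
    (Atil : Finset A) (hAtil : Atil.Nonempty) (hAtil' : Atilᶜ.Nonempty)
    (p : ℝ) (hp : 0 < p) (hp1 : p ≤ 1)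
    (H K : ℕ) (hH : 1 ≤ H) :
    ∃ (Sreset : Finset S) (P : S → A → S → ℝ),
      StochMat P ∧ s11 ∉ Sreset ∧ sdag ∉ Sreset ∧
      -- actions in Ã from the first initial state lead to reset states
      (∀ a ∈ Atil, ∀ s', P s11 a s' ≠ 0 → s' ∈ Sreset) ∧
      -- every action from s† leads to a reset state
      (∀ (a : A) (s' : S), P sdag a s' ≠ 0 → s' ∈ Sreset) ∧
      -- the first initial state admits a reset-free policy
      (∃ πfree : S → A → ℝ, StochPol πfree ∧
        resetProb P πfree Sreset H s11 = 0) ∧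
      -- any algorithm taking Ã at the initial state with probability ≥ p per
      -- episode incurs at least p·K expected resets
      (∀ πs : ℕ → S → A → ℝ, (∀ k, StochPol (πs k)) →
        (∀ k, p ≤ ∑ a ∈ Atil, πs k s11 a) →
        p * K ≤ expectedResets P Sreset sdag πs H s11 K) :=
  exists_mdp_with_linear_resets_general s11 sdag sbar hne₁ hne₂ hne₃ Atil hAtil' p H K hH
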